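/- arXiv:0909.1346 — 2 statements merged into one kernel-verified Lean document; each statement's English description precedes it below -/
import Mathlib

section
/- Any list of n ≥ 1 pairwise-distinct c-tuples has RunCount at least n + c − 1. -/
/-!
Passing from one row to the next adds to the RunCount exactly the number of columns in which
the two rows differ, their Hamming distance, and this is at least `1` when the rows are
distinct. A single row has RunCount `c`, so `n` rows with distinct neighbours have RunCount at
least `c + (n - 1)`.
-/

/-- The number of runs in column `i` of a list of rows: `1 +` the number of
adjacent pairs differing in component `i`, and `0` for the empty list. -/
def runsCol {c : ℕ} {N : Fin c → ℕ} (i : Fin c) :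
    List (∀ k : Fin c, Fin (N k)) → ℕ
  | [] => 0
  | a :: l => 1 + ((a :: l).zip l).countP (fun ab => decide (ab.1 i ≠ ab.2 i))

/-- The RunCount of a list of rows: the sum over all columns of the number of runs. -/
def runCount {c : ℕ} {N : Fin c → ℕ} (l : List (∀ k : Fin c, Fin (N k))) : ℕ :=
  ∑ i : Fin c, runsCol i l

section

variable {c : ℕ} {N : Fin c → ℕ}

lemma runsCol_singleton (i : Fin c) (a : ∀ k : Fin c, Fin (N k)) : runsCol i [a] = 1 := rfl

lemma runsCol_cons_cons (i : Fin c) (a b : ∀ k : Fin c, Fin (N k))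
    (l : List (∀ k : Fin c, Fin (N k))) :
    runsCol i (a :: b :: l) = runsCol i (b :: l) + if a i ≠ b i then 1 else 0 := by
  simp only [runsCol, List.zip_cons_cons, List.countP_cons, decide_eq_true_eq]
  omega

lemma runCount_singleton (a : ∀ k : Fin c, Fin (N k)) : runCount [a] = c := by
  simp [runCount, runsCol_singleton]

lemma runCount_cons_cons (a b : ∀ k : Fin c, Fin (N k)) (l : List (∀ k : Fin c, Fin (N k))) :
    runCount (a :: b :: l) = runCount (b :: l) + hammingDist a b := by
  simp [runCount, runsCol_cons_cons, Finset.sum_add_distrib, hammingDist, Finset.card_filter]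

theorem length_add_le_runCount_of_isChain_ne (a : ∀ k : Fin c, Fin (N k))
    (l : List (∀ k : Fin c, Fin (N k))) (hl : (a :: l).IsChain (· ≠ ·)) :
    l.length + c ≤ runCount (a :: l) := by
  induction l generalizing a with
  | nil => simp [runCount_singleton]
  | cons b l ih =>
    obtain ⟨hab, hbl⟩ := List.isChain_cons_cons.mp hl
    have hdist : 0 < hammingDist a b := hammingDist_pos.mpr hab
    have hrest := ih b hbl
    rw [runCount_cons_cons, List.length_cons]
    omega

end

/-- Any list of `n ≥ 1` pairwise-distinct `c`-tuples has RunCount at least `n + c - 1`. -/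
theorem runCount_ge_of_nodup {c : ℕ} {N : Fin c → ℕ}
    (l : List (∀ k : Fin c, Fin (N k))) (hne : l ≠ []) (hnd : l.Nodup) :
    l.length + c - 1 ≤ runCount l := by
  obtain ⟨a, l, rfl⟩ := List.exists_cons_of_ne_nil hne
  have hchain := length_add_le_runCount_of_isChain_ne a l (List.Pairwise.isChain hnd)
  rw [List.length_cons]
  omega
end

section
/- Let T be a set of n ≥ 1 distinct tuples in ∏_{i=1}^c {1,…,N_i} and let ⪯ be any recursive Gray-code order on this tuple space. Then in the ⪯-sorted list of T, the number of runs in column j is at most min(n, 1 + (N_j − 1)·∏_{i=1}^{j−1} N_i) for every j; consequently the RunCount of the ⪯-sorted list of T is at most μ_GC times the minimum RunCount over all orderings of the rows of T, where μ_GC = (∑_{j=1}^c min(n, 1 + (N_j − 1)·∏_{i=1}^{j−1} N_i)) / (n + c − 1). -/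
/-- A relation on the tuple space `∏ i, {0,…,N i − 1}` is a *recursive order* if for
every `j` and all tuples `a ⪯ b ⪯ d` agreeing (`a` with `d`) on the first `j`
components, `b` also agrees with `a` on the first `j` components. -/
def IsRecursiveOrder {c : ℕ} (N : Fin c → ℕ)
    (le : (∀ k : Fin c, Fin (N k)) → (∀ k : Fin c, Fin (N k)) → Prop) : Prop :=
  ∀ (j : ℕ) (a b d : ∀ k : Fin c, Fin (N k)), le a b → le b d →
    (∀ i : Fin c, (i : ℕ) < j → a i = d i) → ∀ i : Fin c, (i : ℕ) < j → b i = a i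

/-!
Let `L` be the sorted enumeration of all tuples and `P x` the restriction of `x` to the columns
`i < j`. A Gray step changes `P` or column `j`, never both, so along `L` the changes of column `j`
are at most the changes of `(P x, x j)` minus the changes of `P`. The order being recursive, each
fibre of `(P x, x j)` is an interval of `L`, so `(P x, x j)` changes fewer times than it has
values; these are at most `N j` times the values of `P`, which exceed the changes of `P` by
at most one. So column `j` changes at most `(N j - 1) * ∏_{i<j} N i` times along `L`, and no more
along the sublist formed by the rows of `T`. Any ordering of `T` has at least `n + c - 1` runs,
since consecutive distinct rows differ in some column.
-/

namespace List

variable {α β γ : Type*} [DecidableEq β] [DecidableEq γ]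

def countChanges (f : α → β) (q : List α) : ℕ :=
  (q.zip q.tail).countP fun ab => f ab.1 ≠ f ab.2

@[simp] lemma countChanges_nil (f : α → β) : countChanges f [] = 0 := rfl

@[simp] lemma countChanges_singleton (f : α → β) (a : α) : countChanges f [a] = 0 := rfl

@[simp] lemma countChanges_cons_cons (f : α → β) (a b : α) (q : List α) :
    countChanges f (a :: b :: q) = countChanges f (b :: q) + if f a = f b then 0 else 1 := by
  simp [countChanges, countP_cons]

lemma countChanges_le_length_sub_one (f : α → β) (q : List α) :
    countChanges f q ≤ q.length - 1 := by
  have := countP_le_length (p := fun ab : α × α => decide (f ab.1 ≠ f ab.2)) (l := q.zip q.tail)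
  simp only [length_zip, length_tail] at this
  unfold countChanges
  omega

lemma countChanges_le_cons (f : α → β) (a : α) (q : List α) :
    countChanges f q ≤ countChanges f (a :: q) := by
  cases q <;> simp

lemma countChanges_cons_le_cons_cons (f : α → β) (a b : α) (q : List α) :
    countChanges f (a :: q) ≤ countChanges f (a :: b :: q) := by
  cases q with
  | nil => simp
  | cons d q =>
    simp only [countChanges_cons_cons]
    split_ifs <;> grind

lemma Sublist.countChanges_cons_le (f : α → β) {l L : List α} (h : l <+ L) (a : α) :
    countChanges f (a :: l) ≤ countChanges f (a :: L) := by
  induction h generalizing a with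
  | slnil => rfl
  | cons b _ ih => exact (ih a).trans (countChanges_cons_le_cons_cons f a b _)
  | cons_cons b _ ih => simpa using ih b

lemma Sublist.countChanges_le (f : α → β) {l L : List α} (h : l <+ L) :
    countChanges f l ≤ countChanges f L := by
  induction h with
  | slnil => rfl
  | cons a _ ih => exact ih.trans (countChanges_le_cons f a _)
  | cons_cons a h _ => exact h.countChanges_cons_le f a

lemma card_toFinset_map_le_countChanges_add_one (f : α → β) (q : List α) :
    (q.map f).toFinset.card ≤ countChanges f q + 1 := by
  induction q with
  | nil => simp
  | cons a q ih =>
    cases q with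
    | nil => simp
    | cons b q =>
      have hcard := Finset.card_insert_le (f a) ((b :: q).map f).toFinset
      by_cases hab : f a = f b
      · simp_all
      · simp only [map_cons, toFinset_cons, countChanges_cons_cons, hab, if_false] at hcard ih ⊢
        omega

lemma countChanges_le_card_toFinset_map_sub_one {r : α → α → Prop} {f : α → β} {q : List α}
    (hq : q.Pairwise r) (hf : ∀ a b d, r a b → r b d → f a = f d → f b = f a) :
    countChanges f q ≤ (q.map f).toFinset.card - 1 := by
  induction q with
  | nil => simp
  | cons a q ih =>
    cases q with
    | nil => simp
    | cons b q =>
      obtain ⟨hrel, hq⟩ := pairwise_cons.mp hq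
      have hpos : 0 < ((b :: q).map f).toFinset.card := by simp
      by_cases hab : f a = f b
      · simpa [hab] using ih hq
      · have hnew : f a ∉ ((b :: q).map f).toFinset := by
          simp only [mem_toFinset, mem_map, mem_cons]
          rintro ⟨x, rfl | hx, hxa⟩
          · exact hab hxa.symm
          · exact hab (hf a b x (hrel b mem_cons_self) ((pairwise_cons.mp hq).1 x hx)
              hxa.symm).symm
        rw [map_cons, toFinset_cons, Finset.card_insert_of_notMem hnew, countChanges_cons_cons,
          if_neg hab]
        have := ih hq
        omega

lemma countChanges_add_countChanges_le {f : α → β} {g : α → γ} {q : List α}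
    (hq : q.IsChain fun x y => f x = f y ∨ g x = g y) :
    countChanges f q + countChanges g q ≤ countChanges (fun x => (f x, g x)) q := by
  induction q with
  | nil => simp
  | cons a q ih =>
    cases q with
    | nil => simp
    | cons b q =>
      obtain ⟨hab, hq⟩ := isChain_cons_cons.mp hq
      have := ih hq
      simp only [countChanges_cons_cons, Prod.ext_iff]
      split_ifs <;> grind

lemma length_sub_one_le_sum_countChanges {ι : Type*} [Fintype ι] {π : ι → Type*}
    [∀ i, DecidableEq (π i)] {q : List (∀ i, π i)} (hq : q.Nodup) :
    q.length - 1 ≤ ∑ i, countChanges (· i) q := by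
  induction q with
  | nil => simp
  | cons a q ih =>
    cases q with
    | nil => simp
    | cons b q =>
      obtain ⟨hab, hq⟩ := nodup_cons.mp hq
      obtain ⟨i, hi⟩ := Function.ne_iff.mp (ne_of_not_mem_cons hab)
      have hstep : 1 ≤ ∑ j, if a j = b j then 0 else 1 :=
        le_of_eq_of_le (by simp [hi]) (Finset.single_le_sum (fun _ _ => Nat.zero_le _)
          (Finset.mem_univ i))
      simp only [countChanges_cons_cons, Finset.sum_add_distrib, length_cons] at ih ⊢
      have := ih hq
      omega

lemma length_eq_card_of_mem_iff [DecidableEq α] {l : List α} {T : Finset α} (hl : l.Nodup)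
    (hmem : ∀ x, x ∈ l ↔ x ∈ T) : l.length = T.card := by
  rw [← toFinset_card_of_nodup hl]
  congr 1
  ext x
  simp [hmem]

end List

open Finset

section Tuples

variable {c : ℕ} {N : Fin c → ℕ}

lemma runsCol_cons (j : Fin c) (a : ∀ k : Fin c, Fin (N k)) (t : List (∀ k : Fin c, Fin (N k))) :
    runsCol j (a :: t) = 1 + (a :: t).countChanges (· j) :=
  rfl

lemma runsCol_le_one_add_countChanges (j : Fin c) (l : List (∀ k : Fin c, Fin (N k))) :
    runsCol j l ≤ 1 + l.countChanges (· j) := by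
  cases l
  · simp [runsCol]
  · exact (runsCol_cons ..).le

lemma runsCol_le_length (j : Fin c) (l : List (∀ k : Fin c, Fin (N k))) :
    runsCol j l ≤ l.length := by
  cases l with
  | nil => simp [runsCol]
  | cons a t =>
    have := List.countChanges_le_length_sub_one (· j) (a :: t)
    simp only [List.length_cons, runsCol_cons] at this ⊢
    omega

lemma length_add_sub_one_le_runCount {l : List (∀ k : Fin c, Fin (N k))} (hl : l.Nodup)
    (hne : l ≠ []) : l.length + c - 1 ≤ runCount l := by
  obtain ⟨a, t, rfl⟩ := List.exists_cons_of_ne_nil hne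
  have hsum : runCount (a :: t) = c + ∑ j, (a :: t).countChanges (· j) := by
    simp [runCount, runsCol_cons, Finset.sum_add_distrib]
  have := List.length_sub_one_le_sum_countChanges hl
  simp only [List.length_cons] at this ⊢
  omega

lemma restrict_Iio_prod_eq_iff {j : Fin c} {x y : ∀ k : Fin c, Fin (N k)} :
    ((Iio j).restrict x, x j) = ((Iio j).restrict y, y j) ↔
      ∀ i : Fin c, (i : ℕ) < j + 1 → x i = y i := by
  simp only [Prod.ext_iff, funext_iff, Finset.restrict, Subtype.forall, mem_Iio, Nat.lt_succ_iff,
    Nat.le_iff_lt_or_eq, ← Fin.lt_def, Fin.val_inj]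
  grind

lemma IsRecursiveOrder.restrict_Iio_prod_eq
    {le : (∀ k : Fin c, Fin (N k)) → (∀ k : Fin c, Fin (N k)) → Prop} (hrec : IsRecursiveOrder N le) (j : Fin c) (a b d : ∀ k : Fin c, Fin (N k)) (hab : le a b)
    (hbd : le b d) (had : ((Iio j).restrict a, a j) = ((Iio j).restrict d, d j)) :
    ((Iio j).restrict b, b j) = ((Iio j).restrict a, a j) :=
  restrict_Iio_prod_eq_iff.mpr
    (hrec (j + 1) a b d hab hbd (restrict_Iio_prod_eq_iff.mp had))

lemma restrict_Iio_eq_or_eq_of_existsUnique_ne {x y : ∀ k : Fin c, Fin (N k)}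
    (h : ∃! i, x i ≠ y i) (j : Fin c) : (Iio j).restrict x = (Iio j).restrict y ∨ x j = y j := by
  obtain ⟨i₀, -, huniq⟩ := h
  by_contra! hne
  obtain ⟨⟨i, hi⟩, hxy⟩ := Function.ne_iff.mp hne.1
  exact (mem_Iio.mp hi).ne ((huniq i hxy).trans (huniq j hne.2).symm)

lemma countChanges_le_of_isRecursiveOrder
    {le : (∀ k : Fin c, Fin (N k)) → (∀ k : Fin c, Fin (N k)) → Prop}
    (hrec : IsRecursiveOrder N le) {L : List (∀ k : Fin c, Fin (N k))} (hL : L.Pairwise le)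
    (hgray : L.IsChain fun a b => ∃! i, a i ≠ b i) (j : Fin c) :
    L.countChanges (· j) ≤ (N j - 1) * ∏ i ∈ Iio j, N i := by
  set P : (∀ k : Fin c, Fin (N k)) → ∀ i : Iio j, Fin (N i) := (Iio j).restrict
  set K := (L.map P).toFinset
  have hsplit : L.countChanges P + L.countChanges (· j) ≤ L.countChanges fun x => (P x, x j) :=
    List.countChanges_add_countChanges_le
      (hgray.imp fun _ _ h => restrict_Iio_eq_or_eq_of_existsUnique_ne h j)
  have hjoint : L.countChanges (fun x => (P x, x j)) ≤
      (L.map fun x => (P x, x j)).toFinset.card - 1 :=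
    List.countChanges_le_card_toFinset_map_sub_one hL (hrec.restrict_Iio_prod_eq j)
  have hK : K.card ≤ L.countChanges P + 1 := List.card_toFinset_map_le_countChanges_add_one P L
  have hprod : (L.map fun x => (P x, x j)).toFinset.card ≤ K.card * N j := by
    calc _ ≤ (K ×ˢ (univ : Finset (Fin (N j)))).card := card_le_card fun p hp => by
            obtain ⟨x, hx, rfl⟩ := List.mem_map.mp (List.mem_toFinset.mp hp)
            exact mem_product.mpr ⟨List.mem_toFinset.mpr (List.mem_map_of_mem hx), mem_univ _⟩
      _ = K.card * N j := by simp
  have hKle : K.card ≤ ∏ i ∈ Iio j, N i := by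
    simpa [Fintype.card_pi, prod_attach] using card_le_univ K
  calc L.countChanges (· j) ≤ K.card * N j - K.card := by omega
    _ = (N j - 1) * K.card := by rw [Nat.sub_one_mul, mul_comm]
    _ ≤ (N j - 1) * ∏ i ∈ Iio j, N i := Nat.mul_le_mul_left _ hKle

lemma runsCol_le_of_sublist {le : (∀ k : Fin c, Fin (N k)) → (∀ k : Fin c, Fin (N k)) → Prop}
    (hrec : IsRecursiveOrder N le) {l L : List (∀ k : Fin c, Fin (N k))} (hL : L.Pairwise le)
    (hgray : L.IsChain fun a b => ∃! i, a i ≠ b i) (hl : l.Sublist L) (j : Fin c) :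
    runsCol j l ≤ 1 + (N j - 1) * ∏ i ∈ Iio j, N i :=
  (runsCol_le_one_add_countChanges j l).trans <| Nat.add_le_add_left
    ((hl.countChanges_le _).trans (countChanges_le_of_isRecursiveOrder hrec hL hgray j)) 1

lemma runCount_le_div_mul {l l' : List (∀ k : Fin c, Fin (N k))} {n S : ℕ} (hn : 1 ≤ n)
    (hl : runCount l ≤ S) (hl' : n + c - 1 ≤ runCount l') :
    (runCount l : ℝ) ≤ S / ((n : ℝ) + c - 1) * runCount l' := by
  rcases Nat.eq_zero_or_pos c with rfl | hc
  · simp [runCount]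
  have hD : (0 : ℝ) < n + c - 1 := by
    have : (1 : ℝ) ≤ n := by exact_mod_cast hn
    have : (1 : ℝ) ≤ c := by exact_mod_cast hc
    linarith
  have hl'R : (n : ℝ) + c - 1 ≤ runCount l' := by
    have := (Nat.cast_le (α := ℝ)).mpr hl'
    rwa [Nat.cast_sub (by omega), Nat.cast_add, Nat.cast_one] at this
  calc (runCount l : ℝ) ≤ S := by exact_mod_cast hl
    _ = S / ((n : ℝ) + c - 1) * ((n : ℝ) + c - 1) := by field_simp
    _ ≤ S / ((n : ℝ) + c - 1) * runCount l' := by gcongr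

end Tuples

/-- On a table `T` of `n ≥ 1` distinct rows, any recursive Gray-code order (a
recursive order whose sorted enumeration of all tuples has consecutive tuples
differing in exactly one component) yields at most
`min (n, 1 + (N_j − 1)·∏_{i<j} N_i)` runs in column `j`, hence its RunCount is at
most `μ_GC = (∑_j min (n, 1 + (N_j − 1)·∏_{i<j} N_i)) / (n + c − 1)` times the
RunCount of any ordering of the rows of `T`. -/
theorem recursive_gray_order_muGC_optimal {c : ℕ} {N : Fin c → ℕ}
    (T : Finset (∀ k : Fin c, Fin (N k))) (hT : 1 ≤ T.card)
    (le : (∀ k : Fin c, Fin (N k)) → (∀ k : Fin c, Fin (N k)) → Prop)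
    (hlin : IsLinearOrder _ le) (hrec : IsRecursiveOrder N le)
    (hgray : ∀ L : List (∀ k : Fin c, Fin (N k)),
      L.Pairwise le → L.Nodup → (∀ x, x ∈ L) →
      L.Chain' (fun a b => ∃! i : Fin c, a i ≠ b i))
    (l : List (∀ k : Fin c, Fin (N k)))
    (hs : l.Pairwise le) (hnd : l.Nodup) (hmem : ∀ x, x ∈ l ↔ x ∈ T) :
    (∀ j : Fin c,
      runsCol j l ≤ min T.card (1 + (N j - 1) * ∏ i ∈ Finset.Iio j, N i)) ∧
    (∀ l' : List (∀ k : Fin c, Fin (N k)), l'.Nodup → (∀ x, x ∈ l' ↔ x ∈ T) →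
      (runCount l : ℝ) ≤
        (((∑ j : Fin c, min T.card (1 + (N j - 1) * ∏ i ∈ Finset.Iio j, N i) : ℕ) : ℝ) /
            ((T.card : ℝ) + (c : ℝ) - 1)) * (runCount l' : ℝ)) := by
  classical
  have := hlin
  obtain ⟨L, hL, hLnd, hLall⟩ : ∃ L : List (∀ k : Fin c, Fin (N k)),
      L.Pairwise le ∧ L.Nodup ∧ ∀ x, x ∈ L :=
    ⟨univ.sort le, pairwise_sort _ _, sort_nodup _ _, fun x => (mem_sort le).mpr (mem_univ x)⟩
  have hsub : l.Sublist L :=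
    List.sublist_of_subperm_of_pairwise (List.subperm_of_subset hnd fun x _ => hLall x) hs hL
  have hcol : ∀ j : Fin c,
      runsCol j l ≤ min T.card (1 + (N j - 1) * ∏ i ∈ Finset.Iio j, N i) := fun j =>
    le_min ((runsCol_le_length j l).trans (List.length_eq_card_of_mem_iff hnd hmem).le)
      (runsCol_le_of_sublist hrec hL (hgray L hL hLnd hLall) hsub j)
  refine ⟨hcol, fun l' hnd' hmem' => runCount_le_div_mul hT (sum_le_sum fun j _ => hcol j) ?_⟩
  obtain ⟨w, hw⟩ := card_pos.mp hT
  exact List.length_eq_card_of_mem_iff hnd' hmem' ▸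
    length_add_sub_one_le_runCount hnd' (List.ne_nil_of_mem ((hmem' w).mpr hw))
end
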